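/- arXiv:1805.06755 — 3 statements merged into one kernel-verified Lean document; each statement's English description precedes it below -/
import Mathlib

section
/- Let q be a nonnegative integer and let s, μ, ν be real numbers with μ > 0, (2q+1)ν > −1 and s > (2q+1)νμ. Then ∫_0^∞ e^{−sx}·( ∑_{ℓ=0}^{q} C(2q+1, ℓ)·cosh((2q+1 − 2ℓ)μx) )^ν dx = 2^{−ν} · ∑_{k=0}^{∞} ( (−1)^k / k! ) · ( ∏_{j=0}^{k-1} (−(2q+1)ν + j) ) · 1/(s − (2q+1)νμ + 2kμ), where the infinite series on the right converges absolutely. (This series is the hypergeometric value ₂F₁(−(2q+1)ν, s/(2μ) − (2q+1)ν/2; s/(2μ) − (2q+1)ν/2 + 1; −1) divided by (s − (2q+1)νμ).) -/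
/-!
The sum equals `2^{2q} cosh^{2q+1}(μx) = (2 cosh μx)^{2q+1} / 2`, and `2 cosh y = e^y (1 + e^{-2y})`,
so with `α = (2q+1)ν` the integrand is `2^{-ν} e^{-(s-αμ)x} (1 + e^{-2μx})^α`. Expanding
`(1 + t)^α = ∑ C(α,k) t^k` (`0 < t < 1`) and integrating term by term gives the series, since
`∫₀^∞ e^{-(s-αμ+2kμ)x} dx = 1/(s-αμ+2kμ)` and `C(α,k)` is `(-1)^k/k! ∏_{j<k} (j-α)`.
Termwise integration is justified by absolute convergence: the ratio `|C(α,k+1)/C(α,k)| = (k-α)/(k+1)`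
is at most `((k+1)/(k+2))^{1+α}` for `k ≥ α`, so `|C(α,k)| = O(k^{-1-α})` and the series of
absolute values is dominated by `∑ k^{-2-α}`, which converges because `α > -1`.
-/

open Finset MeasureTheory Real

theorem Ring.choose_eq_prod_div {K : Type*} [Field K] [CharZero K] (a : K) (k : ℕ) :
    Ring.choose a k = (∏ j ∈ range k, (a - j)) / k.factorial := by
  rw [Ring.choose_eq_smul, ← descPochhammer_eval_eq_prod_range, smul_eq_mul, inv_mul_eq_div,
    ← descPochhammer_map (algebraMap ℤ K), Polynomial.eval_map_algebraMap,
    Polynomial.aeval_eq_smeval]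

theorem Ring.choose_succ_eq_mul {K : Type*} [Field K] [CharZero K] (a : K) (k : ℕ) :
    Ring.choose a (k + 1) = Ring.choose a k * ((a - k) / (k + 1)) := by
  rw [Ring.choose_eq_prod_div, Ring.choose_eq_prod_div, prod_range_succ, Nat.factorial_succ]
  push_cast
  field_simp

theorem Ring.choose_eq_neg_one_pow_div_mul_prod {K : Type*} [Field K] [CharZero K] (a : K)
    (k : ℕ) : Ring.choose a k = (-1) ^ k / k.factorial * ∏ j ∈ range k, (-a + j) := by
  have hprod : ∏ j ∈ range k, (-a + j) = (-1) ^ k * ∏ j ∈ range k, (a - j) := by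
    have := prod_neg (s := range k) fun j : ℕ => a - j
    rw [card_range] at this
    rw [← this]
    exact prod_congr rfl fun j _ => by ring
  rw [Ring.choose_eq_prod_div, hprod, ← mul_assoc, div_mul_eq_mul_div, ← mul_pow]
  norm_num [div_eq_inv_mul]

lemma one_sub_div_le_rpow_div (k : ℕ) {p : ℝ} (hp : 0 ≤ p) :
    1 - p / (k + 1) ≤ ((k + 1) / (k + 2) : ℝ) ^ p := by
  have hlog : -1 / (k + 1 : ℝ) ≤ log ((k + 1) / (k + 2)) := by
    refine le_of_eq_of_le ?_ (one_sub_inv_le_log_of_pos (by positivity))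
    field_simp
    ring
  calc 1 - p / (k + 1) ≤ exp (-(p / (k + 1))) := by linarith [add_one_le_exp (-(p / (k + 1)))]
    _ ≤ exp (log ((k + 1) / (k + 2)) * p) := by
      gcongr
      rw [show -(p / (k + 1)) = -1 / (k + 1) * p by ring]
      exact mul_le_mul_of_nonneg_right hlog hp
    _ = ((k + 1) / (k + 2) : ℝ) ^ p := (rpow_def_of_pos (by positivity) p).symm

lemma abs_choose_succ_mul_rpow_le {a : ℝ} (ha : -1 < a) {k : ℕ} (hk : a ≤ k) :
    |Ring.choose a (k + 1)| * ((k + 1 : ℕ) + 1 : ℝ) ^ (1 + a) ≤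
      |Ring.choose a k| * ((k : ℝ) + 1) ^ (1 + a) := by
  have hratio : |(a - k) / (k + 1)| = 1 - (1 + a) / (k + 1) := by
    rw [abs_div, abs_of_nonpos (by linarith), abs_of_pos (by positivity)]
    field_simp
    ring
  have hpow : ((k + 1 : ℕ) + 1 : ℝ) ^ (1 + a) * ((k + 1) / (k + 2) : ℝ) ^ (1 + a) =
      ((k : ℝ) + 1) ^ (1 + a) := by
    rw [← mul_rpow (by positivity) (by positivity)]
    push_cast
    congr 1
    field_simp
    ring
  rw [Ring.choose_succ_eq_mul, abs_mul, hratio, ← hpow, mul_right_comm, mul_assoc]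
  gcongr
  exact one_sub_div_le_rpow_div k (by linarith)

lemma exists_abs_choose_le_rpow {a : ℝ} (ha : -1 < a) :
    ∃ C, 0 ≤ C ∧ ∀ k : ℕ, |Ring.choose a k| ≤ C * ((k : ℝ) + 1) ^ (-(1 + a)) := by
  set b : ℕ → ℝ := fun k => |Ring.choose a k| * ((k : ℝ) + 1) ^ (1 + a)
  have hb : ∀ k, 0 ≤ b k := fun k => by positivity
  set m := ⌈a⌉₊
  have hanti : AntitoneOn b {k | m ≤ k} := antitoneOn_nat_Ici_of_succ_le fun k hk =>
    abs_choose_succ_mul_rpow_le ha ((Nat.le_ceil a).trans (by exact_mod_cast hk))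
  refine ⟨∑ j ∈ range (m + 1), b j, sum_nonneg fun j _ => hb j, fun k => ?_⟩
  have hbk : b k ≤ ∑ j ∈ range (m + 1), b j := by
    rcases le_or_gt k m with hkm | hmk
    · exact single_le_sum (fun j _ => hb j) (mem_range.mpr (by omega))
    · exact (hanti (le_refl m) hmk.le hmk.le).trans
        (single_le_sum (fun j _ => hb j) (mem_range.mpr (by omega)))
  rw [rpow_neg (by positivity), ← div_eq_mul_inv, le_div_iff₀ (by positivity)]
  exact hbk

lemma summable_abs_choose_div {a β μ : ℝ} (ha : -1 < a) (hβ : 0 < β) (hμ : 0 < μ) :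
    Summable fun k : ℕ => |Ring.choose a k / (β + k * μ)| := by
  obtain ⟨C, hC0, hC⟩ := exists_abs_choose_le_rpow ha
  set δ := min β μ
  have hδ : 0 < δ := lt_min hβ hμ
  have hp : Summable fun k : ℕ => ((k : ℝ) + 1) ^ (-(2 + a)) := by
    refine ((summable_one_div_nat_add_rpow 1 (2 + a)).mpr (by linarith)).congr fun k => ?_
    rw [rpow_neg (by positivity), abs_of_pos (by positivity), one_div]
  refine Summable.of_nonneg_of_le (fun k => by positivity) (fun k => ?_) (hp.mul_left (C / δ))
  have hlin : ((k : ℝ) + 1) * δ ≤ β + k * μ := by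
    nlinarith [min_le_left β μ, min_le_right β μ, (Nat.cast_nonneg k : (0 : ℝ) ≤ k)]
  have hsplit : ((k : ℝ) + 1) ^ (-(2 + a)) = ((k : ℝ) + 1) ^ (-(1 + a)) / ((k : ℝ) + 1) := by
    rw [eq_div_iff (by positivity), ← rpow_add_one (by positivity)]
    ring_nf
  rw [abs_div, abs_of_pos (a := β + k * μ) (by positivity), hsplit, div_le_iff₀ (by positivity)]
  calc |Ring.choose a k| ≤ C * ((k : ℝ) + 1) ^ (-(1 + a)) := hC k
    _ = C / δ * (((k : ℝ) + 1) ^ (-(1 + a)) / (k + 1)) * ((k + 1) * δ) := by field_simp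
    _ ≤ C / δ * (((k : ℝ) + 1) ^ (-(1 + a)) / (k + 1)) * (β + k * μ) := by gcongr

theorem Real.hasSum_choose_mul_pow (a : ℝ) {t : ℝ} (ht : |t| < 1) :
    HasSum (fun k => Ring.choose a k * t ^ k) ((1 + t) ^ a) := by
  have := (Real.one_add_rpow_hasFPowerSeriesOnBall_zero (a := a)).hasSum (y := t)
    (by simpa [Metric.mem_eball, ← ofReal_norm] using ht)
  simpa [binomialSeries, FormalMultilinearSeries.coeff_ofScalars, mul_comm] using this

lemma integral_exp_neg_mul_Ioi_zero {c : ℝ} (hc : 0 < c) :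
    ∫ x in Set.Ioi (0 : ℝ), exp (-c * x) = 1 / c := by
  rw [integral_exp_mul_Ioi (by linarith), mul_zero, exp_zero]
  field_simp

lemma hasSum_integral_exp_mul_one_add_exp_rpow {a β μ : ℝ} (ha : -1 < a) (hβ : 0 < β)
    (hμ : 0 < μ) :
    HasSum (fun k : ℕ => Ring.choose a k / (β + k * μ))
      (∫ x in Set.Ioi (0 : ℝ), exp (-β * x) * (1 + exp (-μ * x)) ^ a) := by
  set F : ℕ → ℝ → ℝ := fun k x => Ring.choose a k * exp (-(β + k * μ) * x)
  have hpos : ∀ k : ℕ, 0 < β + k * μ := fun k => by positivity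
  have hF_int : ∀ k, Integrable (F k) (volume.restrict (Set.Ioi 0)) := fun k =>
    (exp_neg_integrableOn_Ioi 0 (hpos k)).const_mul _
  have hF_norm : ∀ k, ∫ x in Set.Ioi (0 : ℝ), ‖F k x‖ = |Ring.choose a k / (β + k * μ)| := by
    intro k
    simp only [F, norm_mul, norm_eq_abs, abs_exp]
    rw [integral_const_mul, integral_exp_neg_mul_Ioi_zero (hpos k), mul_one_div, abs_div,
      abs_of_pos (hpos k)]
  have hF_sum : ∀ x ∈ Set.Ioi (0 : ℝ),
      ∑' k, F k x = exp (-β * x) * (1 + exp (-μ * x)) ^ a := by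
    intro x hx
    have ht : |exp (-μ * x)| < 1 := by
      rw [abs_exp, exp_lt_one_iff]
      nlinarith [hx.out]
    rw [← (hasSum_choose_mul_pow a ht).tsum_eq, ← tsum_mul_left]
    congr 1 with k
    rw [← exp_nat_mul, mul_left_comm, ← exp_add]
    simp only [F]
    ring_nf
  have hF_integral : ∀ k, ∫ x in Set.Ioi (0 : ℝ), F k x = Ring.choose a k / (β + k * μ) := by
    intro k
    rw [integral_const_mul, integral_exp_neg_mul_Ioi_zero (hpos k), mul_one_div]
  have := hasSum_integral_of_summable_integral_norm hF_int
    ((summable_abs_choose_div ha hβ hμ).congr fun k => (hF_norm k).symm)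
  rwa [funext hF_integral, setIntegral_congr_fun measurableSet_Ioi hF_sum] at this

lemma two_mul_cosh_pow (n : ℕ) (t : ℝ) :
    (2 * cosh t) ^ n = ∑ k ∈ range (n + 1), n.choose k * cosh ((n - 2 * k) * t) := by
  have hexp : ∀ u : ℝ, (2 * cosh u) ^ n =
      ∑ k ∈ range (n + 1), exp (-((n - 2 * k) * u)) * n.choose k := by
    intro u
    rw [cosh_eq, mul_div_cancel₀ _ two_ne_zero, add_pow]
    refine sum_congr rfl fun k hk => ?_
    rw [← exp_nat_mul, ← exp_nat_mul, ← exp_add, Nat.cast_sub (by grind)]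
    ring_nf
  calc (2 * cosh t) ^ n = ((2 * cosh t) ^ n + (2 * cosh (-t)) ^ n) / 2 := by
        rw [cosh_neg]
        ring
    _ = _ := by
      rw [hexp t, hexp (-t), ← sum_add_distrib, sum_div]
      refine sum_congr rfl fun k _ => ?_
      rw [cosh_eq]
      ring_nf

lemma sum_range_choose_mul_cosh_odd (q : ℕ) (t : ℝ) :
    ∑ l ∈ range (q + 1), ((2 * q + 1).choose l : ℝ) * cosh ((2 * (q : ℝ) + 1 - 2 * l) * t) =
      (2 * cosh t) ^ (2 * q + 1) / 2 := by
  set f : ℕ → ℝ := fun k => ((2 * q + 1).choose k : ℝ) * cosh ((2 * (q : ℝ) + 1 - 2 * k) * t)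
  have hsymm : ∀ k ∈ range (q + 1), f (q + 1 + (q + 1 - 1 - k)) = f k := by
    intro k hk
    have hk : k ≤ 2 * q + 1 := by grind
    simp only [f]
    rw [show q + 1 + (q + 1 - 1 - k) = 2 * q + 1 - k by grind, Nat.choose_symm hk,
      Nat.cast_sub hk, ← cosh_neg]
    push_cast
    ring_nf
  have hrefl : ∑ k ∈ range (q + 1), f (q + 1 + k) = ∑ k ∈ range (q + 1), f k :=
    (sum_range_reflect (fun k => f (q + 1 + k)) (q + 1)).symm.trans (sum_congr rfl hsymm)
  have hfull : (2 * cosh t) ^ (2 * q + 1) = ∑ k ∈ range ((q + 1) + (q + 1)), f k := by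
    rw [two_mul_cosh_pow, show 2 * q + 1 + 1 = (q + 1) + (q + 1) by ring]
    push_cast
    rfl
  rw [hfull, sum_range_add f (q + 1) (q + 1), hrefl]
  ring

lemma two_mul_cosh_rpow (a y : ℝ) : (2 * cosh y) ^ a = exp (a * y) * (1 + exp (-2 * y)) ^ a := by
  have h : 2 * cosh y = exp y * (1 + exp (-2 * y)) := by
    rw [cosh_eq, mul_add, ← exp_add]
    ring_nf
  rw [h, mul_rpow (exp_pos y).le (by positivity), ← exp_mul, mul_comm y]

theorem stmt_7 (q : ℕ) (s μ ν : ℝ) (hμ : 0 < μ)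
    (hν : (2 * (q : ℝ) + 1) * ν > -1) (hs : s > (2 * (q : ℝ) + 1) * ν * μ) :
    (Summable fun k : ℕ =>
        |((-1 : ℝ) ^ k / (Nat.factorial k : ℝ)) *
          (∏ j ∈ Finset.range k, (-((2 * (q : ℝ) + 1) * ν) + (j : ℝ))) *
          (1 / (s - (2 * (q : ℝ) + 1) * ν * μ + 2 * (k : ℝ) * μ))|) ∧
    (∫ x in Set.Ioi (0 : ℝ),
        Real.exp (-s * x) *
          (∑ l ∈ Finset.range (q + 1),
              (Nat.choose (2 * q + 1) l : ℝ) *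
                Real.cosh ((2 * (q : ℝ) + 1 - 2 * (l : ℝ)) * (μ * x))) ^ ν)
    = 2 ^ (-ν) *
        ∑' k : ℕ,
          ((-1 : ℝ) ^ k / (Nat.factorial k : ℝ)) *
            (∏ j ∈ Finset.range k, (-((2 * (q : ℝ) + 1) * ν) + (j : ℝ))) *
            (1 / (s - (2 * (q : ℝ) + 1) * ν * μ + 2 * (k : ℝ) * μ)) := by
  set α := (2 * (q : ℝ) + 1) * ν
  have hβ : 0 < s - α * μ := by linarith
  have hterm : ∀ k : ℕ, (-1 : ℝ) ^ k / k.factorial * (∏ j ∈ range k, (-α + j)) *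
      (1 / (s - α * μ + 2 * k * μ)) = Ring.choose α k / (s - α * μ + k * (2 * μ)) := by
    intro k
    rw [Ring.choose_eq_neg_one_pow_div_mul_prod]
    ring
  have hintegrand : ∀ x : ℝ, exp (-s * x) * (∑ l ∈ range (q + 1), ((2 * q + 1).choose l : ℝ) *
      cosh ((2 * (q : ℝ) + 1 - 2 * l) * (μ * x))) ^ ν =
      2 ^ (-ν) * (exp (-(s - α * μ) * x) * (1 + exp (-(2 * μ) * x)) ^ α) := by
    intro x
    rw [sum_range_choose_mul_cosh_odd, div_rpow (by positivity) zero_le_two, ← rpow_natCast,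
      ← rpow_mul (by positivity), two_mul_cosh_rpow, rpow_neg zero_le_two,
      show -(s - α * μ) * x = -s * x + α * (μ * x) by ring, exp_add,
      show -(2 * μ) * x = -2 * (μ * x) by ring]
    push_cast
    ring
  have hsum := hasSum_integral_exp_mul_one_add_exp_rpow hν hβ (by positivity : 0 < 2 * μ)
  simp only [hterm, hintegrand]
  exact ⟨summable_abs_choose_div hν hβ (by positivity), by rw [integral_const_mul, hsum.tsum_eq]⟩
end

section
/- Let m be a positive integer and let s, β be real numbers with s > 0. Then ∫_0^∞ e^{−sx}·(cos(βx))^{2m} dx = 2^{1−2m} · ∑_{i=0}^{m-1} C(2m, i) · s/(((2m − 2i)β)² + s²) + 2^{−2m}·C(2m, m)/s. -/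
/-!
Expanding `(2 cos θ)^n = (e^{iθ} + e^{-iθ})^n` binomially and taking real parts gives
`(2 cos θ)^n = ∑ₖ C(n,k) cos((n - 2k)θ)`. Each term has the Laplace transform
`∫₀^∞ e^{-sx} cos(bx) dx = Re (1 / (s - ib)) = s / (b² + s²)`. For `n = 2m` the terms `k` and
`2m - k` coincide, which folds the sum over `k ≤ 2m` into twice the sum over `k < m` plus the
middle term `k = m`, whose transform is `1 / s`.
-/

open Finset MeasureTheory

theorem two_mul_cos_pow (n : ℕ) (θ : ℝ) :
    (2 * Real.cos θ) ^ n = ∑ k ∈ range (n + 1), (n.choose k : ℝ) * Real.cos ((n - 2 * k) * θ) := by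
  have hexp : (((2 * Real.cos θ) ^ n : ℝ) : ℂ)
      = ∑ k ∈ range (n + 1),
          ((n.choose k : ℝ) : ℂ) * Complex.exp (((n - 2 * k) * θ : ℝ) * Complex.I) := by
    rw [Complex.ofReal_pow, Complex.ofReal_mul, Complex.ofReal_cos, Complex.ofReal_ofNat,
      Complex.two_cos, add_comm, add_pow]
    refine sum_congr rfl fun k hk => ?_
    have hk : k ≤ n := Nat.lt_succ_iff.mp (mem_range.mp hk)
    rw [← Complex.exp_nat_mul, ← Complex.exp_nat_mul, ← Complex.exp_add, mul_comm]
    congr 2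
    push_cast [Nat.cast_sub hk]
    ring
  simpa only [Complex.ofReal_re, Complex.re_sum, Complex.re_ofReal_mul,
    Complex.exp_ofReal_mul_I_re] using congrArg Complex.re hexp

theorem integrableOn_exp_neg_mul_mul_cos_Ioi {s : ℝ} (hs : 0 < s) (b : ℝ) :
    IntegrableOn (fun x => Real.exp (-s * x) * Real.cos (b * x)) (Set.Ioi 0) := by
  refine IntegrableOn.congr_fun
    (integrableOn_exp_mul_complex_Ioi (a := -s + b * Complex.I) (by simpa) 0).re
    (fun x _ => ?_) measurableSet_Ioi
  simp [Complex.exp_re]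

theorem integral_exp_neg_mul_mul_cos_Ioi {s : ℝ} (hs : 0 < s) (b : ℝ) :
    ∫ x in Set.Ioi 0, Real.exp (-s * x) * Real.cos (b * x) = s / (b ^ 2 + s ^ 2) := by
  have hre : ∀ x : ℝ, Real.exp (-s * x) * Real.cos (b * x)
      = RCLike.re (Complex.exp ((-s + b * Complex.I) * x)) := fun x => by
    simp [Complex.exp_re]
  simp_rw [hre]
  rw [integral_re (integrableOn_exp_mul_complex_Ioi (by simpa) 0),
    integral_exp_mul_complex_Ioi (by simpa) 0]
  simp [Complex.div_re, Complex.normSq]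
  field_simp
  ring

theorem Finset.sum_range_two_mul_add_one_of_symm {M : Type*} [AddCommMonoid M] (f : ℕ → M)
    (m : ℕ) (hf : ∀ k < m, f (2 * m - k) = f k) :
    ∑ k ∈ range (2 * m + 1), f k = 2 • ∑ k ∈ range m, f k + f m := by
  have upper : ∑ k ∈ range m, f (m + (k + 1)) = ∑ k ∈ range m, f k := by
    rw [← sum_range_reflect (fun k => f (m + (k + 1)))]
    refine sum_congr rfl fun k hk => ?_
    rw [mem_range] at hk
    rw [← hf k hk]
    congr 1
    omega
  rw [show 2 * m + 1 = m + (m + 1) by ring, sum_range_add, sum_range_succ', upper, two_nsmul,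
    add_zero]
  abel

theorem two_pow_mul_integral_exp_neg_mul_mul_cos_pow_Ioi {s : ℝ} (hs : 0 < s) (β : ℝ) (n : ℕ) :
    2 ^ n * ∫ x in Set.Ioi 0, Real.exp (-s * x) * Real.cos (β * x) ^ n
      = ∑ k ∈ range (n + 1), (n.choose k : ℝ) * (s / (((n - 2 * k) * β) ^ 2 + s ^ 2)) := by
  have hexpand : ∀ x : ℝ, 2 ^ n * (Real.exp (-s * x) * Real.cos (β * x) ^ n)
      = ∑ k ∈ range (n + 1),
          (n.choose k : ℝ) * (Real.exp (-s * x) * Real.cos ((n - 2 * k) * β * x)) := fun x => by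
    rw [mul_left_comm, ← mul_pow, two_mul_cos_pow, mul_sum]
    refine sum_congr rfl fun k _ => ?_
    rw [mul_assoc _ β x]
    ring
  rw [← integral_const_mul, funext hexpand, integral_finsetSum _ fun k _ =>
    (integrableOn_exp_neg_mul_mul_cos_Ioi hs _).const_mul _]
  simp only [integral_const_mul, integral_exp_neg_mul_mul_cos_Ioi hs]

theorem stmt_11_general (m : ℕ) (s β : ℝ) (hs : 0 < s) :
    ∫ x in Set.Ioi (0 : ℝ), Real.exp (-s * x) * (Real.cos (β * x)) ^ (2 * m)
    = 2 ^ (1 - 2 * (m : ℤ)) *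
        (∑ i ∈ Finset.range m,
          (Nat.choose (2 * m) i : ℝ) *
            (s / (((2 * (m : ℝ) - 2 * (i : ℝ)) * β) ^ 2 + s ^ 2)))
      + 2 ^ (-(2 * (m : ℤ))) * (Nat.choose (2 * m) m : ℝ) / s := by
  have key := two_pow_mul_integral_exp_neg_mul_mul_cos_pow_Ioi hs β (2 * m)
  rw [sum_range_two_mul_add_one_of_symm _ m fun k hk => by
    rw [Nat.choose_symm (by omega : k ≤ 2 * m), Nat.cast_sub (by omega : k ≤ 2 * m)]
    ring_nf] at key
  have hpow : (2 : ℝ) ^ (2 * (m : ℤ)) = 2 ^ (2 * m) := by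
    rw [← zpow_natCast]; push_cast; rfl
  rw [zpow_sub₀ two_ne_zero, zpow_neg, hpow, zpow_one]
  simp only [nsmul_eq_mul, Nat.cast_mul, Nat.cast_ofNat, sub_self, zero_mul] at key
  apply mul_left_cancel₀ (pow_ne_zero (2 * m) two_ne_zero)
  rw [key]
  -- opaque to `field_simp`, which would otherwise normalise each summand differently
  set S := ∑ i ∈ range m, ((2 * m).choose i : ℝ) * (s / (((2 * (m : ℝ) - 2 * i) * β) ^ 2 + s ^ 2))
  field_simp
  ring

theorem stmt_11 (m : ℕ) (hm : 0 < m) (s β : ℝ) (hs : 0 < s) :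
    ∫ x in Set.Ioi (0 : ℝ), Real.exp (-s * x) * (Real.cos (β * x)) ^ (2 * m)
    = 2 ^ (1 - 2 * (m : ℤ)) *
        (∑ i ∈ Finset.range m,
          (Nat.choose (2 * m) i : ℝ) *
            (s / (((2 * (m : ℝ) - 2 * (i : ℝ)) * β) ^ 2 + s ^ 2)))
      + 2 ^ (-(2 * (m : ℤ))) * (Nat.choose (2 * m) m : ℝ) / s :=
  stmt_11_general m s β hs
end

section
/- Let p be a nonnegative integer and let s, λ be real numbers with s > 0. Then ∫_0^∞ e^{−sx}·(sin(λx))^{2p+1} dx = (2p+1)!·λ^{2p+1} / ∏_{j=0}^{p} (s² + (2j+1)²λ²). -/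
/-!
Write `S n = ∫₀^∞ e^{-sx} sin(λx)^n dx`. Integrating by parts twice against `e^{-sx}` (so `d/dx`
becomes multiplication by `s`, and the boundary terms at `0` vanish since `sin 0 = 0`) and using
`cos² = 1 - sin²` gives the reduction formula `(s² + (n+2)²λ²) S (n+2) = (n+2)(n+1)λ² S n`.
Starting from `S 1 = λ / (s² + λ²)`, each odd exponent `2j + 1` contributes the factor
`s² + (2j+1)²λ²` to the denominator, and the numerators multiply up to `(2p+1)! λ^{2p+1}`.
-/

open Finset MeasureTheory Set Real Filter Topology

section ExpWeighted

variable {s : ℝ}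

lemma tendsto_exp_neg_mul_atTop (hs : 0 < s) :
    Tendsto (fun x => exp (-s * x)) atTop (𝓝 0) :=
  tendsto_exp_atBot.comp (tendsto_id.const_mul_atTop_of_neg (neg_lt_zero.2 hs))

lemma integrableOn_exp_neg_mul_of_abs_le (hs : 0 < s) {g : ℝ → ℝ} (hg : Continuous g)
    {C : ℝ} (hC : ∀ x, |g x| ≤ C) :
    IntegrableOn (fun x => exp (-s * x) * g x) (Ioi 0) :=
  (exp_neg_integrableOn_Ioi 0 hs).mul_bdd hg.aestronglyMeasurable
    (ae_of_all _ fun x => (norm_eq_abs _).trans_le (hC x))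

theorem integral_exp_neg_mul_deriv (hs : 0 < s) {f f' : ℝ → ℝ}
    (hf : ∀ x, HasDerivAt f (f' x) x) (hf' : Continuous f') {C C' : ℝ}
    (hfC : ∀ x, |f x| ≤ C) (hf'C : ∀ x, |f' x| ≤ C') :
    ∫ x in Ioi 0, exp (-s * x) * f' x = s * (∫ x in Ioi 0, exp (-s * x) * f x) - f 0 := by
  have hf_cont : Continuous f := continuous_iff_continuousAt.2 fun x => (hf x).continuousAt
  have hint := integrableOn_exp_neg_mul_of_abs_le hs hf_cont hfC
  have hint' := integrableOn_exp_neg_mul_of_abs_le hs hf' hf'C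
  have hderiv : ∀ x ∈ Ici (0 : ℝ), HasDerivAt (fun x => exp (-s * x) * f x)
      (exp (-s * x) * f' x - s * (exp (-s * x) * f x)) x := by
    intro x _
    exact ((((hasDerivAt_id' x).const_mul (-s)).exp).mul (hf x)).congr_deriv (by ring)
  have hlim : Tendsto (fun x => exp (-s * x) * f x) atTop (𝓝 0) :=
    (tendsto_exp_neg_mul_atTop hs).zero_mul_isBoundedUnder_le
      (isBoundedUnder_of ⟨C, fun x => (norm_eq_abs _).trans_le (hfC x)⟩)
  have h : ∫ x in Ioi 0, (exp (-s * x) * f' x - s * (exp (-s * x) * f x)) =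
      0 - exp (-s * 0) * f 0 :=
    integral_Ioi_of_hasDerivAt_of_tendsto' hderiv (hint'.sub (hint.const_mul s)) hlim
  rw [integral_sub hint' (hint.const_mul s), integral_const_mul] at h
  simp only [mul_zero, exp_zero, one_mul, zero_sub] at h
  linarith

end ExpWeighted

section SinPow

variable (lam : ℝ)

lemma abs_sin_pow_le_one (x : ℝ) (n : ℕ) : |sin x ^ n| ≤ 1 := by
  rw [abs_pow]
  exact pow_le_one₀ (abs_nonneg _) (abs_sin_le_one x)

lemma abs_sin_pow_mul_cos_le_one (x : ℝ) (n : ℕ) : |sin x ^ n * cos x| ≤ 1 := by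
  rw [abs_mul]
  exact mul_le_one₀ (abs_sin_pow_le_one x n) (abs_nonneg _) (abs_cos_le_one x)

lemma abs_mul_sin_pow_sub_mul_sin_pow_le {a b : ℝ} (ha : 0 ≤ a) (hb : 0 ≤ b) (x : ℝ)
    (m n : ℕ) : |a * sin x ^ m - b * sin x ^ n| ≤ a + b := by
  refine (abs_sub _ _).trans (add_le_add ?_ ?_)
  · rw [abs_mul, abs_of_nonneg ha]
    exact mul_le_of_le_one_right ha (abs_sin_pow_le_one x m)
  · rw [abs_mul, abs_of_nonneg hb]
    exact mul_le_of_le_one_right hb (abs_sin_pow_le_one x n)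

lemma hasDerivAt_sin_mul_pow_succ (n : ℕ) (x : ℝ) :
    HasDerivAt (fun x => sin (lam * x) ^ (n + 1))
      ((n + 1) * lam * (sin (lam * x) ^ n * cos (lam * x))) x := by
  refine ((((hasDerivAt_id' x).const_mul lam).sin).pow (n + 1)).congr_deriv ?_
  push_cast
  ring

lemma hasDerivAt_sin_mul_pow_succ_mul_cos (n : ℕ) (x : ℝ) :
    HasDerivAt (fun x => sin (lam * x) ^ (n + 1) * cos (lam * x))
      (lam * ((n + 1) * sin (lam * x) ^ n - (n + 2) * sin (lam * x) ^ (n + 2))) x := by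
  refine ((((hasDerivAt_id' x).const_mul lam).sin.pow (n + 1)).mul
    ((hasDerivAt_id' x).const_mul lam).cos).congr_deriv ?_
  simp only [Pi.pow_apply]
  push_cast
  linear_combination ((n : ℝ) + 1) * lam * sin (lam * x) ^ n * sin_sq_add_cos_sq (lam * x)

variable {s : ℝ}

lemma integral_exp_neg_mul_sin_pow_mul_cos (hs : 0 < s) (n : ℕ) :
    (n + 1) * lam * ∫ x in Ioi 0, exp (-s * x) * (sin (lam * x) ^ n * cos (lam * x)) =
      s * ∫ x in Ioi 0, exp (-s * x) * sin (lam * x) ^ (n + 1) := by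
  have h := integral_exp_neg_mul_deriv hs (hasDerivAt_sin_mul_pow_succ lam n) (by fun_prop)
    (fun x => abs_sin_pow_le_one _ (n + 1))
    (fun x => (abs_mul _ _).trans_le
      (mul_le_of_le_one_right (abs_nonneg _) (abs_sin_pow_mul_cos_le_one _ n)))
  simp only [mul_zero, sin_zero, zero_pow n.succ_ne_zero, sub_zero] at h
  rw [← h, ← integral_const_mul]
  congr 1; ext x; ring

lemma integral_exp_neg_mul_sin_pow_succ_mul_cos (hs : 0 < s) (n : ℕ) :
    lam * ((n + 1) * (∫ x in Ioi 0, exp (-s * x) * sin (lam * x) ^ n) -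
        (n + 2) * ∫ x in Ioi 0, exp (-s * x) * sin (lam * x) ^ (n + 2)) =
      s * ∫ x in Ioi 0, exp (-s * x) * (sin (lam * x) ^ (n + 1) * cos (lam * x)) := by
  have h := integral_exp_neg_mul_deriv hs (hasDerivAt_sin_mul_pow_succ_mul_cos lam n) (by fun_prop)
    (fun x => abs_sin_pow_mul_cos_le_one _ (n + 1))
    (fun x => (abs_mul _ _).trans_le (mul_le_mul_of_nonneg_left
      (abs_mul_sin_pow_sub_mul_sin_pow_le (by positivity) (by positivity) _ n (n + 2))
      (abs_nonneg lam)))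
  simp only [mul_zero, sin_zero, zero_pow n.succ_ne_zero, zero_mul, sub_zero] at h
  have hint (m : ℕ) := integrableOn_exp_neg_mul_of_abs_le hs (g := fun x => sin (lam * x) ^ m)
    (by fun_prop) (fun x => abs_sin_pow_le_one _ m)
  rw [← h, ← integral_const_mul, ← integral_const_mul, ← integral_sub ((hint n).const_mul _)
    ((hint (n + 2)).const_mul _), ← integral_const_mul]
  congr 1; ext x; ring

theorem integral_exp_neg_mul_sin_pow_add_two (hs : 0 < s) (n : ℕ) :
    (s ^ 2 + (n + 2) ^ 2 * lam ^ 2) * ∫ x in Ioi 0, exp (-s * x) * sin (lam * x) ^ (n + 2) =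
      (n + 2) * (n + 1) * lam ^ 2 * ∫ x in Ioi 0, exp (-s * x) * sin (lam * x) ^ n := by
  have h₁ := integral_exp_neg_mul_sin_pow_mul_cos lam hs (n + 1)
  have h₂ := integral_exp_neg_mul_sin_pow_succ_mul_cos lam hs n
  push_cast at h₁
  linear_combination (-s) * h₁ - ((n + 2) * lam) * h₂

theorem integral_exp_neg_mul_sin (hs : 0 < s) :
    ∫ x in Ioi 0, exp (-s * x) * sin (lam * x) = lam / (s ^ 2 + lam ^ 2) := by
  have h₁ := integral_exp_neg_mul_sin_pow_mul_cos lam hs 0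
  have h₂ := integral_exp_neg_mul_deriv hs (f := fun x => cos (lam * x))
    (fun x => (((hasDerivAt_id' x).const_mul lam).cos).congr_deriv
      (by ring : _ = -lam * sin (lam * x)))
    (by fun_prop) (fun x => abs_cos_le_one _)
    (fun x => (abs_mul _ _).trans_le (mul_le_of_le_one_right (abs_nonneg _) (abs_sin_le_one _)))
  simp only [pow_zero, one_mul, pow_one, CharP.cast_eq_zero, zero_add] at h₁
  have hsin : ∫ x in Ioi 0, exp (-s * x) * (-lam * sin (lam * x)) =
      -lam * ∫ x in Ioi 0, exp (-s * x) * sin (lam * x) := by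
    rw [← integral_const_mul]
    congr 1; ext x; ring
  simp only [hsin, mul_zero, cos_zero] at h₂
  rw [eq_div_iff (by positivity)]
  linear_combination -s * h₁ - lam * h₂

end SinPow

theorem stmt_14 (p : ℕ) (s lam : ℝ) (hs : 0 < s) :
    ∫ x in Set.Ioi (0 : ℝ), Real.exp (-s * x) * (Real.sin (lam * x)) ^ (2 * p + 1)
    = (Nat.factorial (2 * p + 1) : ℝ) * lam ^ (2 * p + 1) /
        ∏ j ∈ Finset.range (p + 1), (s ^ 2 + (2 * (j : ℝ) + 1) ^ 2 * lam ^ 2) := by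
  induction p with
  | zero => simpa using integral_exp_neg_mul_sin lam hs
  | succ p ih =>
    have hrec := integral_exp_neg_mul_sin_pow_add_two lam hs (2 * p + 1)
    rw [ih] at hrec
    have hfac : ((2 * p + 1 + 2).factorial : ℝ) =
        (2 * p + 3) * (2 * p + 2) * (2 * p + 1).factorial := by
      rw [show 2 * p + 1 + 2 = 2 * p + 1 + 1 + 1 by ring, Nat.factorial_succ, Nat.factorial_succ]
      push_cast; ring
    rw [show 2 * (p + 1) + 1 = 2 * p + 1 + 2 by ring, prod_range_succ, hfac]
    push_cast at hrec ⊢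
    field_simp at hrec ⊢
    linear_combination hrec
end
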